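/- Let G be a finite simple connected graph. If there exists a resolving function g : V(G) → [0,1] with Σ_{v ∈ V(G)} g(v) = dim_f(G) such that g(v) ≤ 1/κ(G) for every vertex v of G, then dim_f^k(G) = k·dim_f(G) for every real number k with 1 < k ≤ κ(G). -/

import Mathlib

/-! Scaling a `k`-resolving function by `c ≥ 0` gives a `c k`-resolving function as long as
its values stay at most `1`. Scaling by `1/k` therefore turns every `k`-resolving function into a
resolving one, so `k · dim_f(G) ≤ dim_f^k(G)`; conversely, the bound `g ≤ 1/κ(G)` is exactly what
keeps `k g` below `1` for `k ≤ κ(G)`, so `k g` is a `k`-resolving function of weight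
`k · dim_f(G)`. -/

open Finset

namespace FracDim

variable {V : Type*}

/-- `R{x,y}`: the set of vertices `z` with `d(x,z) ≠ d(y,z)`. -/
noncomputable def resSet [Fintype V] (G : SimpleGraph V) (x y : V) : Finset V :=
  Finset.univ.filter (fun z => G.dist x z ≠ G.dist y z)

/-- `κ(G) = min { |R{x,y}| : x ≠ y }`. -/
noncomputable def kappa [Fintype V] (G : SimpleGraph V) : ℕ :=
  sInf {n : ℕ | ∃ x y : V, x ≠ y ∧ (resSet G x y).card = n}

/-- A `k`-resolving function: `g : V → [0,1]` with `g(R{x,y}) ≥ k` for all distinct `x, y`. -/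
def IsKResolving [Fintype V] (G : SimpleGraph V) (k : ℝ) (g : V → ℝ) : Prop :=
  (∀ v, 0 ≤ g v ∧ g v ≤ 1) ∧
    ∀ x y : V, x ≠ y → k ≤ ∑ z ∈ resSet G x y, g z

/-- The fractional `k`-metric dimension of `G`. -/
noncomputable def fracKDim [Fintype V] (G : SimpleGraph V) (k : ℝ) : ℝ :=
  sInf {s : ℝ | ∃ g : V → ℝ, IsKResolving G k g ∧ s = ∑ v, g v}

/-- The fractional metric dimension of `G`. -/
noncomputable def fracDim [Fintype V] (G : SimpleGraph V) : ℝ :=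
  fracKDim G 1

variable [Fintype V] {G : SimpleGraph V} {k c : ℝ} {g : V → ℝ}

theorem IsKResolving.const_mul (hg : IsKResolving G k g) (hc : 0 ≤ c)
    (hle : ∀ v, c * g v ≤ 1) : IsKResolving G (c * k) (fun v => c * g v) := by
  refine ⟨fun v => ⟨mul_nonneg hc (hg.1 v).1, hle v⟩, fun x y hxy => ?_⟩
  rw [← Finset.mul_sum]
  exact mul_le_mul_of_nonneg_left (hg.2 x y hxy) hc

theorem bddBelow_kResolving_weights (G : SimpleGraph V) (k : ℝ) :
    BddBelow {s : ℝ | ∃ g : V → ℝ, IsKResolving G k g ∧ s = ∑ v, g v} := by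
  refine ⟨0, ?_⟩
  rintro s ⟨g, hg, rfl⟩
  exact Finset.sum_nonneg fun v _ => (hg.1 v).1

theorem fracKDim_le_sum (hg : IsKResolving G k g) : fracKDim G k ≤ ∑ v, g v :=
  csInf_le (bddBelow_kResolving_weights G k) ⟨g, hg, rfl⟩

theorem le_fracKDim {a : ℝ} (hne : ∃ g, IsKResolving G k g)
    (h : ∀ g, IsKResolving G k g → a ≤ ∑ v, g v) : a ≤ fracKDim G k := by
  obtain ⟨g₀, hg₀⟩ := hne
  refine le_csInf ⟨_, g₀, hg₀, rfl⟩ ?_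
  rintro s ⟨g, hg, rfl⟩
  exact h g hg

theorem fracKDim_le_mul_sum (hg : IsKResolving G 1 g) (hk : 0 ≤ k)
    (hle : ∀ v, k * g v ≤ 1) : fracKDim G k ≤ k * ∑ v, g v := by
  have hkg := hg.const_mul hk hle
  rw [mul_one] at hkg
  rw [Finset.mul_sum]
  exact fracKDim_le_sum hkg

theorem mul_fracDim_le_fracKDim (hk : 1 ≤ k) (hne : ∃ g, IsKResolving G k g) :
    k * fracDim G ≤ fracKDim G k := by
  have hkpos : 0 < k := zero_lt_one.trans_le hk
  refine le_fracKDim hne fun h hh => ?_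
  have hscaled : IsKResolving G 1 (fun v => k⁻¹ * h v) := by
    have := hh.const_mul (inv_nonneg.mpr hkpos.le) fun v =>
      (mul_le_of_le_one_left (hh.1 v).1 (inv_le_one_of_one_le₀ hk)).trans (hh.1 v).2
    rwa [inv_mul_cancel₀ hkpos.ne'] at this
  calc k * fracDim G ≤ k * ∑ v, k⁻¹ * h v :=
        mul_le_mul_of_nonneg_left (fracKDim_le_sum hscaled) hkpos.le
    _ = ∑ v, h v := by rw [← Finset.mul_sum, mul_inv_cancel_left₀ hkpos.ne']

end FracDim

open FracDim in
theorem fracKDim_eq_mul_of_minResolving_le_inv_kappa_general {V : Type*} [Fintype V]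
    (G : SimpleGraph V)
    (g : V → ℝ) (hg : IsKResolving G 1 g) (hmin : ∑ v, g v = fracDim G)
    (hle : ∀ v, g v ≤ 1 / (kappa G : ℝ)) :
    ∀ k : ℝ, 1 < k → k ≤ (kappa G : ℝ) → fracKDim G k = k * fracDim G := by
  intro k hk1 hkκ
  have hk0 : 0 ≤ k := zero_le_one.trans hk1.le
  have hκ : (0 : ℝ) < kappa G := zero_lt_one.trans (hk1.trans_le hkκ)
  have hkg : ∀ v, k * g v ≤ 1 := fun v =>
    calc k * g v ≤ k * (1 / kappa G) := mul_le_mul_of_nonneg_left (hle v) hk0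
      _ ≤ 1 := by rw [mul_one_div, div_le_one hκ]; exact hkκ
  have hupper : fracKDim G k ≤ k * fracDim G := hmin ▸ fracKDim_le_mul_sum hg hk0 hkg
  have hne : ∃ h, IsKResolving G k h := ⟨_, by simpa using hg.const_mul hk0 hkg⟩
  exact hupper.antisymm (mul_fracDim_le_fracKDim hk1.le hne)

open FracDim in
/-- If there is a minimum resolving function `g` of `G` with `g(v) ≤ 1/κ(G)` for every
vertex `v`, then `dim_f^k(G) = k · dim_f(G)` for every real `k` with `1 < k ≤ κ(G)`. -/
theorem fracKDim_eq_mul_of_minResolving_le_inv_kappa {V : Type*} [Fintype V]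
    (G : SimpleGraph V) (hG : G.Connected)
    (g : V → ℝ) (hg : IsKResolving G 1 g) (hmin : ∑ v, g v = fracDim G)
    (hle : ∀ v, g v ≤ 1 / (kappa G : ℝ)) :
    ∀ k : ℝ, 1 < k → k ≤ (kappa G : ℝ) → fracKDim G k = k * fracDim G :=
  fracKDim_eq_mul_of_minResolving_le_inv_kappa_general G g hg hmin hle
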